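/- arXiv:1611.04458 — 7 statements merged into one kernel-verified Lean document; each statement's English description precedes it below -/
import Mathlib

section
/- Let f : G → H be a semi-planar function between finite abelian groups of the same even order k. Then the incidence graph of S(G,H;f) is either connected, or it has exactly two connected components, and each of the two components contains exactly k²/2 points and exactly k²/2 lines. -/
/-!
Translations `v ↦ v + t` of `G × H` are automorphisms of `S(G,H;f)` acting regularly on the
lines, so every component contains the same number `t` of lines and
`#components * t = k²`. The component of `L(0,0)` contains every line
`L(a, f (u + a) - f u)`, and semi-planarity makes these `1 + (k - 1) k / 2` distinct lines.
Hence `3 t > k²`, leaving at most two components. A point `(x, y)` lies on `L(x, y - f 0)`,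
so each component has as many points as lines.
-/

/-- A function `f : G → H` is *semi-planar* if for every nonzero `a : G` and every
`y : H`, the equation `f (x + a) - f x = y` has either 0 or exactly 2 solutions. -/
def IsSemiPlanar {G H : Type*} [AddGroup G] [AddGroup H] (f : G → H) : Prop :=
  ∀ a : G, a ≠ 0 → ∀ y : H,
    Nat.card {x : G // f (x + a) - f x = y} = 0 ∨
    Nat.card {x : G // f (x + a) - f x = y} = 2

/-- The point `p = (x, y)` is incident with the line `l = L(a, b)` iff `y = f (x - a) + b`. -/
def Incid {G H : Type*} [Sub G] [Add H] (f : G → H) (p l : G × H) : Prop :=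
  p.2 = f (p.1 - l.1) + l.2

/-- The adjacency relation of the incidence graph of `S(G,H;f)`: points on the left,
lines on the right, a point adjacent to a line iff incident. -/
def IncAdj {G H : Type*} [Sub G] [Add H] (f : G → H) :
    (G × H) ⊕ (G × H) → (G × H) ⊕ (G × H) → Prop
  | Sum.inl p, Sum.inr l => Incid f p l
  | Sum.inr l, Sum.inl p => Incid f p l
  | _, _ => False

/-- The incidence graph of `S(G,H;f)`. -/
def incGraph {G H : Type*} [Sub G] [Add H] (f : G → H) :
    SimpleGraph ((G × H) ⊕ (G × H)) where
  Adj := IncAdj f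
  symm := by
    constructor
    intro v w h
    cases v <;> cases w <;> exact h
  loopless := by
    constructor
    intro v h
    cases v <;> exact h

/-- The line `L(a,b)` belongs to the substructure `S₁`, i.e. lies in the same
connected component of the incidence graph as the line `L(0,0)`. -/
def InS1 {G H : Type*} [SubtractionMonoid G] [SubNegMonoid H] (f : G → H) (l : G × H) : Prop :=
  (incGraph f).Reachable (Sum.inr l) (Sum.inr ((0 : G), (0 : H)))

open SimpleGraph fwdDiff

theorem two_mul_card_range_of_card_fiber {α β : Type*} [Finite α] {g : α → β}
    (hg : ∀ y, Nat.card {x // g x = y} = 0 ∨ Nat.card {x // g x = y} = 2) :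
    2 * Nat.card (Set.range g) = Nat.card α := by
  classical
  have := Fintype.ofFinite α
  have hfiber (y : Set.range g) : Nat.card {x // Set.rangeFactorization g x = y} = 2 := by
    rw [Nat.card_congr (Equiv.subtypeEquivRight fun x => Subtype.ext_iff)]
    obtain ⟨x, hx⟩ := y.2
    have : Nonempty {x // g x = y} := ⟨⟨x, hx⟩⟩
    exact (hg y).resolve_left Nat.card_pos.ne'
  rw [← Nat.card_congr (Equiv.sigmaFiberEquiv (Set.rangeFactorization g)), Nat.card_sigma,
    Finset.sum_congr rfl fun y _ => hfiber y, Finset.sum_const, smul_eq_mul, Finset.card_univ,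
    Fintype.card_eq_nat_card, mul_comm]

theorem SimpleGraph.connected_of_card_connectedComponent_eq_one {V : Type*} {G : SimpleGraph V}
    (h : Nat.card G.ConnectedComponent = 1) : G.Connected := by
  obtain ⟨hsub, ⟨c⟩⟩ := Nat.card_eq_one_iff_unique.mp h
  refine (connected_iff G).mpr ⟨fun u v => ConnectedComponent.eq.mp (hsub.elim _ _), ?_⟩
  induction c using ConnectedComponent.ind with
  | h v => exact ⟨v⟩

section

variable {G H : Type*} [AddCommGroup G] [AddCommGroup H] {f : G → H}

theorem IsSemiPlanar.two_mul_card_range_fwdDiff [Finite G] (hf : IsSemiPlanar f) {a : G}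
    (ha : a ≠ 0) : 2 * Nat.card (Set.range (Δ_[a] f)) = Nat.card G :=
  two_mul_card_range_of_card_fiber (hf a ha)

theorem incid_add_add_iff {p l : G × H} (t : G × H) :
    Incid f (p + t) (l + t) ↔ Incid f p l := by
  simp only [Incid, Prod.fst_add, Prod.snd_add, add_sub_add_right_eq_sub, ← add_assoc,
    add_left_inj]

variable (f) in
def incGraphTranslate (t : G × H) : incGraph f ≃g incGraph f where
  toEquiv := Equiv.sumCongr (Equiv.addRight t) (Equiv.addRight t)
  map_rel_iff' := by
    rintro (p | l) (q | m)
    · exact Iff.rfl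
    · exact incid_add_add_iff t
    · exact incid_add_add_iff t
    · exact Iff.rfl

theorem incGraph_reachable_inr_inr_iff {l l' : G × H} :
    (incGraph f).Reachable (Sum.inr l) (Sum.inr l') ↔ InS1 f (l - l') := by
  rw [← Iso.reachable_iff (φ := incGraphTranslate f (-l'))]
  simp only [incGraphTranslate, RelIso.coe_fn_mk, Equiv.sumCongr_apply, Equiv.coe_addRight,
    Sum.map_inr, add_neg_cancel, sub_eq_add_neg]
  exact Iff.rfl

theorem incGraph_adj_inl_inr_sub (p : G × H) :
    (incGraph f).Adj (Sum.inl p) (Sum.inr (p.1, p.2 - f 0)) := by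
  show p.2 = f (p.1 - p.1) + (p.2 - f 0)
  simp

-- Both lines pass through the point `(u + a, f (u + a))`.
theorem inS1_fwdDiff (a u : G) : InS1 f (a, Δ_[a] f u) := by
  have h₁ : (incGraph f).Adj (Sum.inl (u + a, f (u + a))) (Sum.inr (a, Δ_[a] f u)) := by
    show f (u + a) = f (u + a - a) + (f (u + a) - f u)
    simp
  have h₂ : (incGraph f).Adj (Sum.inl (u + a, f (u + a))) (Sum.inr (0, 0)) := by
    show f (u + a) = f (u + a - 0) + 0
    simp
  exact h₁.symm.reachable.trans h₂.reachable

variable (f) in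
def diffLines : Set (G × H) := {l | l.2 ∈ Set.range (Δ_[l.1] f)}

theorem diffLines_subset_inS1 : diffLines f ⊆ {l | InS1 f l} := by
  rintro ⟨a, b⟩ ⟨u, rfl : Δ_[a] f u = b⟩
  exact inS1_fwdDiff a u

theorem IsSemiPlanar.two_mul_card_diffLines [Fintype G] [Finite H] (hf : IsSemiPlanar f) :
    2 * Nat.card (diffLines f) = 2 + (Fintype.card G - 1) * Fintype.card G := by
  classical
  have hzero : Set.range (Δ_[(0 : G)] f) = {0} := by
    simp [fwdDiff]
  have hsigma : Nat.card (diffLines f) = Nat.card (Σ a, Set.range (Δ_[a] f)) :=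
    Nat.card_congr (Equiv.subtypeProdEquivSigmaSubtype fun a b => b ∈ Set.range (Δ_[a] f))
  rw [hsigma, Nat.card_sigma, Fintype.sum_eq_add_sum_compl 0, hzero, mul_add, Finset.mul_sum,
    Finset.sum_congr rfl fun a ha =>
      hf.two_mul_card_range_fwdDiff (Finset.mem_compl.mp ha ∘ Finset.mem_singleton.mpr),
    Finset.sum_const, smul_eq_mul, Finset.card_compl, Finset.card_singleton, Nat.card_unique,
    Nat.card_eq_fintype_card]

theorem incGraph_exists_mk_inr_eq (c : (incGraph f).ConnectedComponent) :
    ∃ l, (incGraph f).connectedComponentMk (Sum.inr l) = c := by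
  induction c using ConnectedComponent.ind with
  | h v =>
    rcases v with p | l
    · exact ⟨_, ConnectedComponent.eq.mpr (incGraph_adj_inl_inr_sub p).reachable.symm⟩
    · exact ⟨l, rfl⟩

theorem incGraph_card_lines_of_component (c : (incGraph f).ConnectedComponent) :
    Nat.card {l // (incGraph f).connectedComponentMk (Sum.inr l) = c} =
      Nat.card {l // InS1 f l} := by
  obtain ⟨l₀, rfl⟩ := incGraph_exists_mk_inr_eq c
  refine Nat.card_congr ((Equiv.subRight l₀).subtypeEquiv fun l => ?_)
  rw [ConnectedComponent.eq, incGraph_reachable_inr_inr_iff, Equiv.subRight_apply]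

theorem incGraph_card_points_of_component (c : (incGraph f).ConnectedComponent) :
    Nat.card {p // (incGraph f).connectedComponentMk (Sum.inl p) = c} =
      Nat.card {l // (incGraph f).connectedComponentMk (Sum.inr l) = c} := by
  refine Nat.card_congr
    (((Equiv.refl G).prodCongr (Equiv.subRight (f 0))).subtypeEquiv fun p => ?_)
  rw [ConnectedComponent.eq.mpr (incGraph_adj_inl_inr_sub p).reachable]
  rfl

theorem incGraph_card_connectedComponent_mul [Finite G] [Finite H] :
    Nat.card (incGraph f).ConnectedComponent * Nat.card {l // InS1 f l} = Nat.card (G × H) := by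
  have := Fintype.ofFinite (incGraph f).ConnectedComponent
  rw [← Nat.card_congr
      (Equiv.sigmaFiberEquiv fun l => (incGraph f).connectedComponentMk (Sum.inr l)),
    Nat.card_sigma, Finset.sum_congr rfl fun c _ => incGraph_card_lines_of_component c,
    Finset.sum_const, smul_eq_mul, Finset.card_univ, Fintype.card_eq_nat_card]

end

theorem connected_or_two_components_general {G H : Type*} [AddCommGroup G] [AddCommGroup H]
    [Fintype G] [Fintype H]
    (hcard : Fintype.card G = Fintype.card H)
    (f : G → H) (hf : IsSemiPlanar f) :
    (incGraph f).Connected ∨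
    (Nat.card (incGraph f).ConnectedComponent = 2 ∧
      ∀ c : (incGraph f).ConnectedComponent,
        Nat.card {p : G × H // (incGraph f).connectedComponentMk (Sum.inl p) = c}
          = Fintype.card G ^ 2 / 2 ∧
        Nat.card {l : G × H // (incGraph f).connectedComponentMk (Sum.inr l) = c}
          = Fintype.card G ^ 2 / 2) := by
  set m := Nat.card (incGraph f).ConnectedComponent
  set t := Nat.card {l // InS1 f l}
  have htotal : m * t = Fintype.card G * Fintype.card G := by
    rw [incGraph_card_connectedComponent_mul, Nat.card_prod, Nat.card_eq_fintype_card,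
      Nat.card_eq_fintype_card, hcard]
  have hlower : 2 + (Fintype.card G - 1) * Fintype.card G ≤ 2 * t :=
    hf.two_mul_card_diffLines.symm.le.trans
      (Nat.mul_le_mul_left 2 (Nat.card_mono (Set.toFinite _) diffLines_subset_inS1))
  have hm_pos : 0 < m := Nat.card_pos
  have hm_le : m ≤ 2 := by
    by_contra! hm
    have hk : 1 ≤ Fintype.card G := Fintype.card_pos
    have h3t : 3 * t ≤ Fintype.card G * Fintype.card G := htotal ▸ Nat.mul_le_mul_right t hm
    zify [hk] at hlower h3t
    nlinarith [sq_nonneg (2 * (Fintype.card G : ℤ) - 3)]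
  obtain hm | hm : m = 1 ∨ m = 2 := by omega
  · exact Or.inl (connected_of_card_connectedComponent_eq_one hm)
  · refine Or.inr ⟨hm, fun c => ?_⟩
    rw [incGraph_card_points_of_component, incGraph_card_lines_of_component, sq]
    rw [hm] at htotal
    omega

/-- The incidence graph of `S(G,H;f)` for a semi-planar `f` is either connected, or has
exactly two connected components, each containing exactly `k²/2` points and `k²/2`
lines. -/
theorem connected_or_two_components {G H : Type*} [AddCommGroup G] [AddCommGroup H]
    [Fintype G] [Fintype H]
    (hcard : Fintype.card G = Fintype.card H) (heven : Even (Fintype.card G))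
    (f : G → H) (hf : IsSemiPlanar f) :
    (incGraph f).Connected ∨
    (Nat.card (incGraph f).ConnectedComponent = 2 ∧
      ∀ c : (incGraph f).ConnectedComponent,
        Nat.card {p : G × H // (incGraph f).connectedComponentMk (Sum.inl p) = c}
          = Fintype.card G ^ 2 / 2 ∧
        Nat.card {l : G × H // (incGraph f).connectedComponentMk (Sum.inr l) = c}
          = Fintype.card G ^ 2 / 2) :=
  connected_or_two_components_general hcard f hf
end

section
/- Let f : G → H be a semi-planar function between finite abelian groups of the same even order k, and suppose the incidence graph of S(G,H;f) is not connected. Then for every a ∈ G, the set P_a^1 = {b ∈ H : L(a,b) ∈ S_1} has exactly k/2 elements. -/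
/-!
Lines `L(a, b)` and `L(a', b')` meet iff `b' - b` lies in the difference set
`D(a' - a) = {f (x + a' - a) - f x}`, and semi-planarity makes `|D(c)| = k / 2` for `c ≠ 0`.
So the component of any line at `a₀ ≠ a` contains a translate of `D(a - a₀)`, i.e. at least
`k / 2` of the `k` lines `L(a, ·)`. Both `S₁` and `S₂` are unions of components and both have
a line at `a₀`, so each takes at least, hence exactly, `k / 2` of them.
-/

open Finset

section IncidenceGraph

variable {G H : Type*} [AddCommGroup G] [AddCommGroup H] (f : G → H)

def diffImage [Fintype G] [DecidableEq H] (c : G) : Finset H :=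
  univ.image fun x => f (x + c) - f x

/-- The lines `L(a, b)` and `L(a', b + f (u + (a' - a)) - f u)` meet in the point
`(u + a', f (u + (a' - a)) + b)`. -/
theorem reachable_line_add_diff (a a' : G) (b : H) (u : G) :
    (incGraph f).Reachable (Sum.inr (a, b)) (Sum.inr (a', b + (f (u + (a' - a)) - f u))) := by
  have h₁ : (incGraph f).Adj (Sum.inr (a, b)) (Sum.inl (u + a', f (u + (a' - a)) + b)) := by
    show f (u + (a' - a)) + b = f (u + a' - a) + b
    rw [add_sub_assoc]
  have h₂ : (incGraph f).Adj (Sum.inl (u + a', f (u + (a' - a)) + b))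
      (Sum.inr (a', b + (f (u + (a' - a)) - f u))) := by
    show f (u + (a' - a)) + b = f (u + a' - a') + (b + (f (u + (a' - a)) - f u))
    rw [add_sub_cancel_right]
    abel
  exact h₁.reachable.trans h₂.reachable

theorem card_diffImage_mul_two [Fintype G] [DecidableEq H] (hf : IsSemiPlanar f) {c : G}
    (hc : c ≠ 0) : (diffImage f c).card * 2 = Fintype.card G := by
  have hfiber : ∀ y ∈ diffImage f c, #{x | f (x + c) - f x = y} = 2 := by
    intro y hy
    obtain ⟨x, -, hx⟩ := mem_image.mp hy
    have hcard : Nat.card {x : G // f (x + c) - f x = y} = #{x | f (x + c) - f x = y} := by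
      rw [Nat.card_eq_fintype_card, Fintype.card_subtype]
    have hpos : 0 < #{x | f (x + c) - f x = y} := card_pos.mpr ⟨x, by simpa using hx⟩
    rcases hf c hc y with h | h <;> omega
  rw [← card_univ, card_eq_sum_card_image (fun x => f (x + c) - f x), ← diffImage,
    sum_congr rfl hfiber, sum_const, smul_eq_mul]

section Closed

variable {f} {S : G × H → Prop}
  (hS : ∀ l l', S l → (incGraph f).Reachable (Sum.inr l) (Sum.inr l') → S l')
include hS

theorem exists_line_of_reachable_closed {l : G × H} (hl : S l) (a : G) : ∃ b, S (a, b) :=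
  ⟨_, hS _ _ hl (reachable_line_add_diff f l.1 a l.2 0)⟩

theorem card_diffImage_le_of_reachable_closed [Fintype G] [Fintype H] [DecidableEq H]
    {a₀ a : G} {b₀ : H} (h₀ : S (a₀, b₀)) :
    (diffImage f (a - a₀)).card ≤ Nat.card {b : H // S (a, b)} := by
  classical
  rw [Nat.card_eq_fintype_card, Fintype.card_subtype]
  refine card_le_card_of_injOn (b₀ + ·) ?_ (add_right_injective b₀).injOn
  intro d hd
  obtain ⟨x, -, rfl⟩ := mem_image.mp hd
  simpa using hS _ _ h₀ (reachable_line_add_diff f a₀ a b₀ x)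

end Closed

theorem exists_not_inS1 (hnc : ¬ (incGraph f).Connected) : ∃ l, ¬ InS1 f l := by
  by_contra! hS1
  refine hnc (SimpleGraph.connected_iff_exists_forall_reachable _ |>.mpr
    ⟨Sum.inr (0, 0), ?_⟩)
  rintro (p | l)
  · have hp : (incGraph f).Adj (Sum.inl p) (Sum.inr (0, p.2 - f p.1)) := by
      show p.2 = f (p.1 - 0) + (p.2 - f p.1)
      rw [sub_zero, add_sub_cancel]
    exact ((hS1 _).symm.trans hp.reachable.symm)
  · exact (hS1 l).symm

theorem inS1_of_reachable {l l' : G × H} (hl : InS1 f l)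
    (h : (incGraph f).Reachable (Sum.inr l) (Sum.inr l')) : InS1 f l' :=
  h.symm.trans hl

theorem not_inS1_of_reachable {l l' : G × H} (hl : ¬ InS1 f l)
    (h : (incGraph f).Reachable (Sum.inr l) (Sum.inr l')) : ¬ InS1 f l' :=
  fun hl' => hl (h.trans hl')

end IncidenceGraph

/-- If the incidence graph of `S(G,H;f)` is not connected, then for every `a : G` the
set `P_a^1 = {b : H | L(a,b) ∈ S₁}` has exactly `k/2` elements. -/
theorem card_Pa1 {G H : Type*} [AddCommGroup G] [AddCommGroup H]
    [Fintype G] [Fintype H]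
    (hcard : Fintype.card G = Fintype.card H) (heven : Even (Fintype.card G))
    (f : G → H) (hf : IsSemiPlanar f)
    (hnc : ¬ (incGraph f).Connected) :
    ∀ a : G, Nat.card {b : H // InS1 f (a, b)} = Fintype.card G / 2 := by
  classical
  intro a
  have : Nontrivial G := Fintype.one_lt_card_iff_nontrivial.mp <| by
    obtain ⟨m, hm⟩ := heven
    have := Fintype.card_pos (α := G)
    omega
  obtain ⟨a₀, ha₀⟩ := exists_ne a
  have hS₁ := fun l l' => inS1_of_reachable f (l := l) (l' := l')
  have hS₂ := fun l l' => not_inS1_of_reachable f (l := l) (l' := l')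
  obtain ⟨l, hl⟩ := exists_not_inS1 f hnc
  obtain ⟨b₀, hb₀⟩ := exists_line_of_reachable_closed hS₁ (SimpleGraph.Reachable.refl _) a₀
  obtain ⟨b₁, hb₁⟩ := exists_line_of_reachable_closed hS₂ hl a₀
  have hD := card_diffImage_mul_two f hf (sub_ne_zero.mpr ha₀.symm)
  have hP := card_diffImage_le_of_reachable_closed hS₁ (a := a) hb₀
  have hQ := card_diffImage_le_of_reachable_closed hS₂ (a := a) hb₁
  have hPQ : Nat.card {b : H // InS1 f (a, b)} + Nat.card {b : H // ¬ InS1 f (a, b)}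
      = Fintype.card G := by
    rw [hcard, Nat.card_eq_fintype_card, Nat.card_eq_fintype_card, Fintype.card_subtype_compl,
      Nat.add_sub_of_le (Fintype.card_subtype_le _)]
  omega
end

section
/- Let f : G → H be a semi-planar function between finite abelian groups of the same even order k. For each nonzero a ∈ G and each b ∈ H, the set S(a,b) = {t ∈ G : f(t − a) = f(t) + b} has exactly 2 elements if and only if for every d ∈ H and every integer α the lines L(α•a, d+b) and L((α+1)•a, d) have a common point, i.e., there exists x ∈ G with f(x − α•a) + d + b = f(x − (α+1)•a) + d. -/
section SemiPlanar

variable {G H : Type*}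

def subEqAddEquivSubEqNeg [AddGroup G] [AddCommGroup H] (f : G → H) (a : G) (b : H) :
    {t : G // f (t - a) = f t + b} ≃ {x : G // f (x + a) - f x = -b} :=
  (Equiv.subRight a).subtypeEquiv fun t => by
    rw [Equiv.subRight_apply, sub_add_cancel]
    grind

theorem exists_shifted_sub_eq_iff [AddCommGroup G] [AddCommGroup H]
    (f : G → H) (a : G) (b d : H) (α : ℤ) :
    (∃ x : G, f (x - α • a) + d + b = f (x - (α + 1) • a) + d) ↔
      ∃ t : G, f (t - a) = f t + b := by
  have hshift : ∀ t : G, t + α • a - (α + 1) • a = t - a := fun t => by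
    rw [add_smul, one_smul]; abel
  constructor
  · rintro ⟨x, hx⟩
    refine ⟨x - α • a, ?_⟩
    have := hshift (x - α • a)
    rw [sub_add_cancel] at this
    rw [← this, ← add_right_cancel_iff (a := d), ← hx]
    abel
  · rintro ⟨t, ht⟩
    refine ⟨t + α • a, ?_⟩
    rw [hshift, add_sub_cancel_right, ht]
    abel

theorem IsSemiPlanar.card_eq_two_iff_nonempty [AddGroup G] [AddGroup H] [Finite G]
    {f : G → H} (hf : IsSemiPlanar f) {a : G} (ha : a ≠ 0) (y : H) :
    Nat.card {x : G // f (x + a) - f x = y} = 2 ↔ Nonempty {x : G // f (x + a) - f x = y} :=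
  ⟨fun h => (Nat.card_pos_iff.mp (h ▸ two_pos)).1,
    fun _ => (hf a ha y).resolve_left Nat.card_pos.ne'⟩

end SemiPlanar

theorem card_S_eq_two_iff_general {G H : Type*} [AddCommGroup G] [AddCommGroup H]
    [Fintype G]
    (f : G → H) (hf : IsSemiPlanar f) (a : G) (ha : a ≠ 0) (b : H) :
    Nat.card {t : G // f (t - a) = f t + b} = 2 ↔
      ∀ d : H, ∀ α : ℤ, ∃ x : G,
        f (x - α • a) + d + b = f (x - (α + 1) • a) + d := by
  let e := subEqAddEquivSubEqNeg f a b
  rw [Nat.card_congr e, hf.card_eq_two_iff_nonempty ha, ← e.nonempty_congr, nonempty_subtype]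
  simp only [exists_shifted_sub_eq_iff, forall_const]

/-- For nonzero `a : G` and `b : H`, the set `S(a,b) = {t : G | f(t-a) = f(t)+b}` has
exactly two elements iff for every `d : H` and every integer `α` the lines
`L(α•a, d+b)` and `L((α+1)•a, d)` have a common point. -/
theorem card_S_eq_two_iff {G H : Type*} [AddCommGroup G] [AddCommGroup H]
    [Fintype G] [Fintype H]
    (hcard : Fintype.card G = Fintype.card H) (heven : Even (Fintype.card G))
    (f : G → H) (hf : IsSemiPlanar f) (a : G) (ha : a ≠ 0) (b : H) :
    Nat.card {t : G // f (t - a) = f t + b} = 2 ↔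
      ∀ d : H, ∀ α : ℤ, ∃ x : G,
        f (x - α • a) + d + b = f (x - (α + 1) • a) + d :=
  card_S_eq_two_iff_general f hf a ha b
end

section
/- Let f : G → H be a semi-planar function between finite abelian groups of the same even order k > 2, and suppose the incidence graph of S(G,H;f) is not connected. Then for every nonzero a ∈ G: P_a^1 = {b ∈ H : the set S(a,b) has exactly 2 elements} and P_a^2 = {b ∈ H : S(a,b) is empty}. -/
/-!
Two lines of `S(G,H;f)` through a common point differ by a vector `(a, f (x + a) - f x)`, so the
lines in the component of `L(0,0)` form the subgroup `K ≤ G × H` generated by these vectors.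
Its fibre `{b | (a, b) ∈ K}` is a coset of `N = K ∩ ({0} × H)`, and for `a ≠ 0` it contains the
`|G| / 2` (by semi-planarity) values of `x ↦ f (x + a) - f x`. If the graph is disconnected then
`N ≠ H`, so `|N| ≤ |H| / 2`: hence `N` has index 2 and every fibre of `K` over `a ≠ 0` is exactly
the set of values of `x ↦ f (x + a) - f x`.
Index 2 makes `(a, b) ∈ K ↔ (-a, b) ∈ K`, which matches the sign in `S(a,b)`.
-/

open AddSubgroup AddMonoidHom

section ProdSubgroup

variable {G H : Type*} [AddCommGroup G] [AddCommGroup H] {K : AddSubgroup (G × H)}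

theorem AddSubgroup.mk_mem_iff_sub_mem_comap_inr {a : G} {b c : H} (hc : (a, c) ∈ K) :
    (a, b) ∈ K ↔ b - c ∈ K.comap (inr G H) := by
  rw [mem_comap, AddMonoidHom.inr_apply, ← add_mem_cancel_right (neg_mem hc), Prod.neg_mk,
    Prod.mk_add_mk, add_neg_cancel, ← sub_eq_add_neg]

theorem AddSubgroup.card_fiber_eq_card_comap_inr {a : G} {c : H} (hc : (a, c) ∈ K) :
    Nat.card {b : H | (a, b) ∈ K} = Nat.card (K.comap (inr G H)) :=
  Nat.card_congr <| (Equiv.subRight c).subtypeEquiv fun _ => mk_mem_iff_sub_mem_comap_inr hc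

theorem AddSubgroup.eq_top_of_comap_inr_eq_top (hK : ∀ a : G, ∃ c : H, (a, c) ∈ K)
    (h : K.comap (inr G H) = ⊤) : K = ⊤ := by
  refine eq_top_iff.mpr fun ⟨a, b⟩ _ => ?_
  obtain ⟨c, hc⟩ := hK a
  exact (mk_mem_iff_sub_mem_comap_inr hc).mpr (h ▸ mem_top _)

theorem AddSubgroup.neg_mk_mem_iff_of_index_comap_inr_eq_two
    (h : (K.comap (inr G H)).index = 2) {a : G} {b : H} :
    (-a, b) ∈ K ↔ (a, b) ∈ K := by
  have h2b : ((0 : G), b + b) ∈ K := add_self_mem_of_index_two h b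
  rw [← neg_mem_iff, Prod.neg_mk, neg_neg, ← add_mem_cancel_right h2b, Prod.mk_add_mk, add_zero,
    neg_add_cancel_left]

end ProdSubgroup

theorem Nat.card_eq_two_mul_card_range {α β : Type*} [Finite α] {g : α → β}
    (hg : ∀ x, Nat.card {x' // g x' = g x} = 2) :
    Nat.card α = 2 * Nat.card (Set.range g) := by
  classical
  have := Fintype.ofFinite α
  have hfib : ∀ y ∈ Finset.univ.image g, (Finset.univ.filter (g · = y)).card = 2 := by
    rintro y hy
    obtain ⟨x, -, rfl⟩ := Finset.mem_image.mp hy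
    rw [← Fintype.card_subtype, ← Nat.card_eq_fintype_card, hg]
  rw [Nat.card_eq_fintype_card, ← Finset.card_univ, Finset.card_eq_sum_card_image g,
    Finset.sum_const_nat hfib, mul_comm, Nat.card_eq_card_toFinset, Set.toFinset_range]

section SemiPlanar

variable {G H : Type*} [AddCommGroup G] [AddCommGroup H] {f : G → H}

theorem IsSemiPlanar.card_eq_two_iff [Finite G] (hf : IsSemiPlanar f) {a : G} (ha : a ≠ 0)
    (y : H) : Nat.card {x : G // f (x + a) - f x = y} = 2 ↔ ∃ x, f (x + a) - f x = y := by
  refine ⟨fun h => ?_, fun ⟨x, hx⟩ => (hf a ha y).resolve_left ?_⟩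
  · obtain ⟨⟨x, hx⟩, -⟩ := Nat.card_pos_iff.mp (h ▸ two_pos)
    exact ⟨x, hx⟩
  · exact Nat.card_ne_zero.mpr ⟨⟨x, hx⟩, inferInstance⟩

theorem IsSemiPlanar.card_eq_two_mul_card_range [Finite G] (hf : IsSemiPlanar f) {a : G}
    (ha : a ≠ 0) : Nat.card G = 2 * Nat.card (Set.range fun x => f (x + a) - f x) :=
  Nat.card_eq_two_mul_card_range fun x => (hf.card_eq_two_iff ha _).mpr ⟨x, rfl⟩

end SemiPlanar

namespace IncidenceStructure

variable {G H : Type*} [AddCommGroup G] [AddCommGroup H] (f : G → H)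

def diffSet : Set (G × H) := {v | ∃ x, f (x + v.1) - f x = v.2}

def diffGroup : AddSubgroup (G × H) := closure (diffSet f)

/-- A line through the given point, resp. the given line itself. -/
def lineThrough : (G × H) ⊕ (G × H) → G × H
  | Sum.inl p => (p.1, p.2 - f 0)
  | Sum.inr l => l

variable {f}

theorem incid_lineThrough_inl (p : G × H) : Incid f p (lineThrough f (Sum.inl p)) := by
  simp [Incid, lineThrough]

theorem sub_mem_diffSet_of_incid {p l l' : G × H} (h : Incid f p l) (h' : Incid f p l') :
    l' - l ∈ diffSet f :=
  ⟨p.1 - l'.1, by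
    rw [Prod.fst_sub, Prod.snd_sub, sub_add_sub_cancel, eq_sub_of_add_eq h.symm,
      eq_sub_of_add_eq h'.symm, sub_sub_sub_cancel_left]⟩

theorem mk_sub_mem_diffGroup (a : G) : (a, f a - f 0) ∈ diffGroup f :=
  AddSubgroup.subset_closure ⟨0, by rw [zero_add]⟩

theorem reachable_add_of_mem_diffSet (l : G × H) {v : G × H} (hv : v ∈ diffSet f) :
    (incGraph f).Reachable (Sum.inr l) (Sum.inr (v + l)) := by
  obtain ⟨x, hx⟩ := hv
  let p : G × H := (x + v.1 + l.1, f (x + v.1) + l.2)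
  have hl : (incGraph f).Adj (Sum.inr l) (Sum.inl p) := by
    change p.2 = f (p.1 - l.1) + l.2
    simp [p]
  have hvl : (incGraph f).Adj (Sum.inl p) (Sum.inr (v + l)) := by
    change p.2 = f (p.1 - (v + l).1) + (v + l).2
    simp only [p, Prod.fst_add, Prod.snd_add, add_sub_add_right_eq_sub, add_sub_cancel_right, ← hx]
    abel
  exact hl.reachable.trans hvl.reachable

theorem sub_mem_diffGroup_of_adj {u v : (G × H) ⊕ (G × H)} (h : (incGraph f).Adj u v) :
    lineThrough f v - lineThrough f u ∈ diffGroup f := by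
  apply AddSubgroup.subset_closure
  match u, v, h with
  | Sum.inl p, Sum.inr _, h => exact sub_mem_diffSet_of_incid (incid_lineThrough_inl p) h
  | Sum.inr _, Sum.inl p, h => exact sub_mem_diffSet_of_incid h (incid_lineThrough_inl p)

theorem sub_mem_diffGroup_of_reachable {u v : (G × H) ⊕ (G × H)}
    (h : (incGraph f).Reachable u v) :
    lineThrough f v - lineThrough f u ∈ diffGroup f := by
  rw [SimpleGraph.reachable_iff_reflTransGen] at h
  induction h with
  | refl => rw [sub_self]; exact zero_mem _
  | tail _ hvw ih => rw [← sub_add_sub_cancel]; exact add_mem (sub_mem_diffGroup_of_adj hvw) ih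

theorem inS1_iff_mem_diffGroup (l : G × H) : InS1 f l ↔ l ∈ diffGroup f := by
  refine ⟨fun h => ?_, fun h => ?_⟩
  · simpa [lineThrough, ← Prod.zero_eq_mk] using sub_mem_diffGroup_of_reachable h
  · induction h using closure_induction_left with
    | zero => exact SimpleGraph.Reachable.refl _
    | add_left v hv l _ ih => exact (reachable_add_of_mem_diffSet l hv).symm.trans ih
    | neg_add_cancel v hv l _ ih =>
      have h := reachable_add_of_mem_diffSet (-v + l) hv
      rw [add_neg_cancel_left] at h
      exact h.trans ih

theorem connected_of_diffGroup_eq_top (h : diffGroup f = ⊤) : (incGraph f).Connected := by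
  have hline : ∀ l, (incGraph f).Reachable (Sum.inr l) (Sum.inr 0) := fun l =>
    (inS1_iff_mem_diffGroup l).mpr (h ▸ mem_top l)
  have hvertex : ∀ u, (incGraph f).Reachable u (Sum.inr 0) := fun
    | Sum.inl p => (SimpleGraph.Adj.reachable (incid_lineThrough_inl p)).trans (hline _)
    | Sum.inr l => hline l
  exact (SimpleGraph.connected_iff _).mpr
    ⟨fun u v => (hvertex u).trans (hvertex v).symm, ⟨Sum.inr 0⟩⟩

theorem range_sub_subset_fiber_diffGroup (a : G) :
    Set.range (fun x => f (x + a) - f x) ⊆ {b | (a, b) ∈ diffGroup f} := by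
  rintro _ ⟨x, rfl⟩
  exact AddSubgroup.subset_closure ⟨x, rfl⟩

variable [Finite G] [Finite H]

theorem card_range_sub_eq_and_index_eq_two (hf : IsSemiPlanar f)
    (hcard : Nat.card G = Nat.card H) (hK : diffGroup f ≠ ⊤) {a : G} (ha : a ≠ 0) :
    Nat.card (Set.range fun x => f (x + a) - f x) = Nat.card ((diffGroup f).comap (inr G H)) ∧
      ((diffGroup f).comap (inr G H)).index = 2 := by
  set N := (diffGroup f).comap (inr G H)
  have hN : N ≠ ⊤ := mt (eq_top_of_comap_inr_eq_top fun a => ⟨_, mk_sub_mem_diffGroup a⟩) hK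
  have hle : Nat.card (Set.range fun x => f (x + a) - f x) ≤ Nat.card N :=
    card_fiber_eq_card_comap_inr (mk_sub_mem_diffGroup (f := f) a) ▸
      Nat.card_mono (Set.toFinite _) (range_sub_subset_fiber_diffGroup a)
  have hindex : 2 ≤ N.index := one_lt_index_of_ne_top hN
  have hNpos : 0 < Nat.card N := Nat.card_pos
  have hHN := N.card_mul_index
  have hGr := hf.card_eq_two_mul_card_range ha
  constructor <;> nlinarith

theorem fiber_diffGroup_eq_range (hf : IsSemiPlanar f) (hcard : Nat.card G = Nat.card H)
    (hK : diffGroup f ≠ ⊤) {a : G} (ha : a ≠ 0) :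
    {b | (a, b) ∈ diffGroup f} = Set.range fun x => f (x + a) - f x := by
  refine (Set.eq_of_subset_of_ncard_le (range_sub_subset_fiber_diffGroup a) ?_
    (Set.toFinite _)).symm
  rw [← Nat.card_coe_set_eq, ← Nat.card_coe_set_eq, card_fiber_eq_card_comap_inr
    (mk_sub_mem_diffGroup a), (card_range_sub_eq_and_index_eq_two hf hcard hK ha).1]

end IncidenceStructure

open IncidenceStructure

theorem Pa1_Pa2_description_general {G H : Type*} [AddCommGroup G] [AddCommGroup H]
    [Fintype G] [Fintype H]
    (hcard : Fintype.card G = Fintype.card H)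
    (f : G → H) (hf : IsSemiPlanar f)
    (hnc : ¬ (incGraph f).Connected) :
    ∀ a : G, a ≠ 0 →
      {b : H | InS1 f (a, b)} = {b : H | Nat.card {t : G // f (t - a) = f t + b} = 2} ∧
      {b : H | ¬ InS1 f (a, b)} = {b : H | ∀ t : G, f (t - a) ≠ f t + b} := by
  intro a ha
  rw [Fintype.card_eq_nat_card, Fintype.card_eq_nat_card] at hcard
  have hK : diffGroup f ≠ ⊤ := mt connected_of_diffGroup_eq_top hnc
  have hna : -a ≠ 0 := neg_ne_zero.mpr ha
  have hS : ∀ b t, f (t + -a) - f t = b ↔ f (t - a) = f t + b := fun b t => by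
    rw [← sub_eq_add_neg, sub_eq_iff_eq_add']
  have hInS1 : ∀ b, InS1 f (a, b) ↔ ∃ t, f (t - a) = f t + b := fun b => by
    rw [inS1_iff_mem_diffGroup, ← neg_mk_mem_iff_of_index_comap_inr_eq_two
      (card_range_sub_eq_and_index_eq_two hf hcard hK ha).2]
    exact (Set.ext_iff.mp (fiber_diffGroup_eq_range hf hcard hK hna) b).trans
      (exists_congr fun t => hS b t)
  have hcard_two : ∀ b, Nat.card {t : G // f (t - a) = f t + b} = 2 ↔ ∃ t, f (t - a) = f t + b :=
    fun b => by
      rw [← Nat.card_congr (Equiv.subtypeEquivRight (hS b)), hf.card_eq_two_iff hna]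
      exact exists_congr fun t => hS b t
  exact ⟨Set.ext fun b => (hInS1 b).trans (hcard_two b).symm,
    Set.ext fun b => (not_congr (hInS1 b)).trans not_exists⟩

/-- If `k > 2` and the incidence graph of `S(G,H;f)` is not connected, then for nonzero
`a : G`, `P_a^1` is the set of `b` with `|S(a,b)| = 2` and `P_a^2` is the set of `b`
with `S(a,b) = ∅`. -/
theorem Pa1_Pa2_description {G H : Type*} [AddCommGroup G] [AddCommGroup H]
    [Fintype G] [Fintype H]
    (hcard : Fintype.card G = Fintype.card H) (heven : Even (Fintype.card G))
    (f : G → H) (hf : IsSemiPlanar f)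
    (hk : 2 < Fintype.card G) (hnc : ¬ (incGraph f).Connected) :
    ∀ a : G, a ≠ 0 →
      {b : H | InS1 f (a, b)} = {b : H | Nat.card {t : G // f (t - a) = f t + b} = 2} ∧
      {b : H | ¬ InS1 f (a, b)} = {b : H | ∀ t : G, f (t - a) ≠ f t + b} :=
  Pa1_Pa2_description_general hcard f hf hnc
end

section
/- Let f : G → H be a semi-planar function between finite abelian groups of the same even order k > 2, and suppose the incidence graph of S(G,H;f) is not connected. If a ∈ G satisfies 0 ∈ P_a^1 (i.e., L(a,0) ∈ S_1), then P_a^1 = P_0^1 and P_a^2 = P_0^2. -/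
/-! Shifting the `H`-coordinate of every point and line by `c` preserves incidence, so it maps
the path from `L(a,0)` to `L(0,0)` to a path from `L(a,b)` to `L(0,b)`; hence `L(a,b)` and
`L(0,b)` always lie in the same component. -/

theorem Incid.shift {G H : Type*} [Sub G] [AddSemigroup H] {f : G → H} {p l : G × H}
    (h : Incid f p l) (c : H) : Incid f (p.1, p.2 + c) (l.1, l.2 + c) := by
  unfold Incid at h ⊢
  rw [h, add_assoc]

def incGraphShift {G H : Type*} [Sub G] [AddSemigroup H] (f : G → H) (c : H) :
    incGraph f →g incGraph f where
  toFun := Sum.map (fun p => (p.1, p.2 + c)) (fun l => (l.1, l.2 + c))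
  map_rel' := by
    rintro (p | l) (q | m) h
    · exact h.elim
    · exact Incid.shift (f := f) h c
    · exact Incid.shift (f := f) h c
    · exact h.elim

theorem reachable_line_shift {G H : Type*} [Sub G] [AddSemigroup H] {f : G → H}
    {l₁ l₂ : G × H} (h : (incGraph f).Reachable (Sum.inr l₁) (Sum.inr l₂)) (c : H) :
    (incGraph f).Reachable (Sum.inr (l₁.1, l₁.2 + c)) (Sum.inr (l₂.1, l₂.2 + c)) :=
  h.map (incGraphShift f c)

theorem Pa_eq_P0_of_zero_mem_general {G H : Type*} [AddCommGroup G] [AddCommGroup H]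
    (f : G → H)
    (a : G) (ha : InS1 f (a, (0 : H))) :
    {b : H | InS1 f (a, b)} = {b : H | InS1 f ((0 : G), b)} ∧
    {b : H | ¬ InS1 f (a, b)} = {b : H | ¬ InS1 f ((0 : G), b)} := by
  have hjoin (b : H) : (incGraph f).Reachable (Sum.inr (a, b)) (Sum.inr ((0 : G), b)) := by
    simpa using reachable_line_shift ha b
  have key (b : H) : InS1 f (a, b) ↔ InS1 f ((0 : G), b) :=
    ⟨(hjoin b).symm.trans, (hjoin b).trans⟩
  exact ⟨Set.ext key, Set.ext fun b => not_congr (key b)⟩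

/-- If `k > 2`, the incidence graph of `S(G,H;f)` is not connected, and `0 ∈ P_a^1`
(i.e. `L(a,0) ∈ S₁`), then `P_a^1 = P_0^1` and `P_a^2 = P_0^2`. -/
theorem Pa_eq_P0_of_zero_mem {G H : Type*} [AddCommGroup G] [AddCommGroup H]
    [Fintype G] [Fintype H]
    (hcard : Fintype.card G = Fintype.card H) (heven : Even (Fintype.card G))
    (f : G → H) (hf : IsSemiPlanar f)
    (hk : 2 < Fintype.card G) (hnc : ¬ (incGraph f).Connected)
    (a : G) (ha : InS1 f (a, (0 : H))) :
    {b : H | InS1 f (a, b)} = {b : H | InS1 f ((0 : G), b)} ∧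
    {b : H | ¬ InS1 f (a, b)} = {b : H | ¬ InS1 f ((0 : G), b)} :=
  Pa_eq_P0_of_zero_mem_general f a ha
end

section
/- Let k be an even integer with k > 4 and let f : ℤ/kℤ → ℤ/kℤ. If there exists y ∈ ℤ/kℤ such that the equation f(x) = y has more than k/2 solutions x ∈ ℤ/kℤ, then f is not semi-planar. -/
/-!
Double counting: an ordered pair `x ≠ x'` in a fibre of `f` of size `s` is a solution of
`f (x + a) - f x = 0` with `a = -x + x' ≠ 0`, so semi-planarity gives `s (s - 1) ≤ 2 (k - 1)`.
For even `k = 2m` and `s ≥ m + 1` this forces `m ≤ 2`.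
-/

open Finset

section DoubleCounting

variable {G H : Type*} [AddGroup G] [Fintype G] [DecidableEq G] [DecidableEq H]

theorem card_offDiag_fiber_le_sum (f : G → H) (y : H) :
    #(univ.filter (f · = y)).offDiag ≤
      ∑ a ∈ univ.erase 0, #(univ.filter fun x => f (x + a) = f x) := by
  rw [← card_sigma]
  refine card_le_card_of_injOn (fun p => ⟨-p.1 + p.2, p.1⟩) ?_ ?_
  · rintro ⟨x, x'⟩ hp
    obtain ⟨hx, hx', hne⟩ := mem_offDiag.mp hp
    simp only [mem_filter, mem_univ, true_and] at hx hx'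
    simp [neg_add_eq_zero, hne, hx, hx']
  · rintro ⟨x₁, x₁'⟩ - ⟨x₂, x₂'⟩ - h
    simp only [Sigma.mk.inj_iff, heq_eq_eq] at h
    obtain ⟨hsub, rfl⟩ := h
    simp [add_left_cancel hsub]

end DoubleCounting

theorem IsSemiPlanar.card_add_eq_le_two {G H : Type*} [AddGroup G] [AddGroup H] {f : G → H}
    (hf : IsSemiPlanar f) {a : G} (ha : a ≠ 0) :
    Nat.card {x // f (x + a) = f x} ≤ 2 := by
  rw [← Nat.card_congr (Equiv.subtypeEquivRight fun x => sub_eq_zero)]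
  rcases hf a ha 0 with h | h <;> omega

theorem IsSemiPlanar.card_fiber_mul_pred_le {G H : Type*} [AddGroup G] [Finite G] [AddGroup H]
    {f : G → H} (hf : IsSemiPlanar f) (y : H) :
    Nat.card {x // f x = y} * (Nat.card {x // f x = y} - 1) ≤ 2 * (Nat.card G - 1) := by
  classical
  have := Fintype.ofFinite G
  calc Nat.card {x // f x = y} * (Nat.card {x // f x = y} - 1)
      = #(univ.filter (f · = y)).offDiag := by
        rw [offDiag_card, Nat.card_eq_fintype_card, Fintype.card_subtype, Nat.mul_sub_one]
    _ ≤ ∑ a ∈ univ.erase (0 : G), #(univ.filter fun x => f (x + a) = f x) :=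
        card_offDiag_fiber_le_sum f y
    _ ≤ ∑ _a ∈ univ.erase (0 : G), 2 := sum_le_sum fun a ha => by
        simpa only [Nat.card_eq_fintype_card, Fintype.card_subtype] using
          hf.card_add_eq_le_two (ne_of_mem_erase ha)
    _ = 2 * (Nat.card G - 1) := by
        rw [sum_const, card_erase_of_mem (mem_univ _), card_univ, Nat.card_eq_fintype_card,
          smul_eq_mul, mul_comm]

/-- If `k > 4` is even and some value `y` is taken by `f : ℤ/kℤ → ℤ/kℤ` more than
`k/2` times, then `f` is not semi-planar. -/
theorem not_semiPlanar_of_many_solutions (k : ℕ) (hk : 4 < k) (hke : Even k)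
    (f : ZMod k → ZMod k) (y : ZMod k)
    (hy : k / 2 < Nat.card {x : ZMod k // f x = y}) :
    ¬ IsSemiPlanar f := by
  intro hf
  have : NeZero k := ⟨by omega⟩
  have hcount := hf.card_fiber_mul_pred_le y
  rw [Nat.card_zmod] at hcount
  obtain ⟨m, rfl⟩ := hke
  set n := Nat.card {x : ZMod (m + m) // f x = y}
  have hn : m + 1 ≤ n := by omega
  have hlower : (m + 1) * m ≤ n * (n - 1) := Nat.mul_le_mul hn (by omega)
  have htwo_mul : 2 * (m + m - 1) + 2 = 4 * m := by omega
  nlinarith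
end

section
/- There is no semi-planar function f : ℤ/6ℤ → ℤ/6ℤ; that is, there is no function f : ℤ/6ℤ → ℤ/6ℤ such that for every nonzero a ∈ ℤ/6ℤ and every y ∈ ℤ/6ℤ the equation f(x + a) − f(x) = y has either 0 or exactly 2 solutions x ∈ ℤ/6ℤ. -/
/-!
Adding an affine map `x ↦ c * x + d` shifts each difference `f (x + a) - f x` by the constant
`c * a`, so it preserves semi-planarity; choosing `c = f 0 - f 1` and `d = -f 0` we may assume
`f 0 = f 1 = 0`. The remaining `6 ^ 4` functions on `ℤ/6ℤ` are ruled out by exhaustive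
evaluation.
-/

section SemiPlanar

variable {G H : Type*} [AddGroup G]

theorem isSemiPlanar_iff_card_filter [AddGroup H] [Fintype G] [DecidableEq H] (f : G → H) :
    IsSemiPlanar f ↔ ∀ a : G, a ≠ 0 → ∀ y : H,
      (Finset.univ.filter fun x => f (x + a) - f x = y).card = 0 ∨
      (Finset.univ.filter fun x => f (x + a) - f x = y).card = 2 := by
  simp only [IsSemiPlanar, Nat.card_eq_fintype_card, Fintype.card_subtype]

theorem IsSemiPlanar.add_addMonoidHom_add_const [AddCommGroup H] {f : G → H}
    (hf : IsSemiPlanar f) (φ : G →+ H) (d : H) : IsSemiPlanar fun x => f x + φ x + d := by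
  intro a ha y
  have hsol : ∀ x, (f (x + a) + φ (x + a) + d) - (f x + φ x + d) = y ↔
      f (x + a) - f x = y - φ a := fun x => by
    rw [map_add, eq_sub_iff_add_eq]
    constructor <;> intro h <;> rw [← h] <;> abel
  simpa only [Nat.card_congr (Equiv.subtypeEquivRight hsol)] using hf a ha (y - φ a)

theorem IsSemiPlanar.exists_apply_zero_apply_one {R : Type*} [Ring R] {f : R → R}
    (hf : IsSemiPlanar f) : ∃ g : R → R, IsSemiPlanar g ∧ g 0 = 0 ∧ g 1 = 0 :=
  ⟨_, hf.add_addMonoidHom_add_const (AddMonoidHom.mulLeft (f 0 - f 1)) (-f 0),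
    by simp, by simp⟩

end SemiPlanar

theorem not_isSemiPlanar_zmod6_vecCons_zero_zero (v₂ v₃ v₄ v₅ : ZMod 6) :
    ¬ IsSemiPlanar (![0, 0, v₂, v₃, v₄, v₅] : ZMod 6 → ZMod 6) := by
  rw [isSemiPlanar_iff_card_filter]
  revert v₂ v₃ v₄ v₅
  decide

/-- There is no semi-planar function on `ℤ/6ℤ`. -/
theorem no_semiPlanar_ZMod6 : ∀ f : ZMod 6 → ZMod 6, ¬ IsSemiPlanar f := by
  intro f hf
  obtain ⟨g, hg, hg₀, hg₁⟩ := hf.exists_apply_zero_apply_one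
  have hg_eq : g = ![0, 0, g 2, g 3, g 4, g 5] := by
    funext x
    fin_cases x
    exacts [hg₀, hg₁, rfl, rfl, rfl, rfl]
  exact not_isSemiPlanar_zmod6_vecCons_zero_zero _ _ _ _ (hg_eq ▸ hg)
end
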